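/- arXiv:1501.05978 — 2 statements merged into one kernel-verified Lean document; each statement's English description precedes it below -/
import Mathlib

section
/- Let u_1,...,u_n be i.i.d. V-valued random variables whose common distribution is homothety-invariant, and set s_w = u_1 + ... + u_w. Then P[u_1,...,u_n are linearly dependent] ≤ Σ_{w≥1} C(n,w) (q-1)^{w-1} P[s_w = 0]. -/
/-!
Every nonzero relation `l` is a nonzero multiple of one normalised to `1` at a chosen point of its
support `S`, and for `#S = w` there are `(q - 1) ^ (w - 1)` normalised relations with support `S`.
The event `∑ i, l i • u i = 0` only involves the `w` coordinates in `S`, and rescaling each of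
them by `l i ≠ 0` does not change their joint law, so it has probability `P[s_w = 0]`. The union
bound over all normalised relations gives the estimate.
-/

open MeasureTheory Finset

namespace MeasureTheory

variable {α β : Type*} [MeasurableSpace α] [MeasurableSpace β]

theorem measure_preimage_le_of_map_eq {f : α → β} {μ : Measure α} {ν : Measure β}
    [NeZero ν] (h : μ.map f = ν) (s : Set β) : μ (f ⁻¹' s) ≤ ν s :=
  h ▸ Measure.le_map_apply (.of_map_ne_zero (h ▸ NeZero.ne ν)) s

theorem Measure.pi_map_comp_of_injective {ι κ : Type*} [Fintype ι] [Fintype κ]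
    (μ : Measure α) [IsProbabilityMeasure μ] {e : κ → ι} (he : Function.Injective e) :
    (Measure.pi fun _ : ι => μ).map (fun f => f ∘ e) = Measure.pi fun _ : κ => μ := by
  classical
  refine (Measure.pi_eq fun s hs => ?_).symm
  have hpre : (fun f : ι → α => f ∘ e) ⁻¹' Set.univ.pi s
      = Set.univ.pi (Function.extend e s fun _ => Set.univ) := by
    ext f
    simp only [Set.mem_preimage, Set.mem_univ_pi, Function.comp_apply]
    refine ⟨fun hf i => ?_, fun hf k => by simpa [he.extend_apply] using hf (e k)⟩
    by_cases hi : ∃ k, e k = i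
    · obtain ⟨k, rfl⟩ := hi
      simpa [he.extend_apply] using hf k
    · simp [Function.extend_apply' _ _ _ hi]
  rw [Measure.map_apply (by fun_prop) (.univ_pi hs), hpre, Measure.pi_pi,
    ← prod_subset (subset_univ (univ.image e)), prod_image he.injOn]
  · simp [he.extend_apply]
  · intro i _ hi
    rw [Function.extend_apply' _ _ _ (by simpa using hi), measure_univ]

theorem Measure.pi_map_pi_of_map_eq {ι : Type*} [Fintype ι] {μ : Measure α} [SigmaFinite μ]
    [NeZero μ] {f : ι → α → α} (hf : ∀ i, μ.map (f i) = μ) :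
    (Measure.pi fun _ : ι => μ).map (fun g i => f i (g i)) = Measure.pi fun _ : ι => μ := by
  have : ∀ i, SigmaFinite (μ.map (f i)) := fun i => by rw [hf i]; infer_instance
  rw [Measure.pi_map_pi fun i => .of_map_ne_zero ((hf i).symm ▸ NeZero.ne μ)]
  simp_rw [hf]

end MeasureTheory

theorem exists_finset_line_representatives_of_support {ι F : Type*} [Fintype ι] [DecidableEq ι]
    [Field F] [Fintype F] [DecidableEq F] (S : Finset ι) :
    ∃ R : Finset (ι → F), #R = (Fintype.card F - 1) ^ (#S - 1) ∧
      (∀ r ∈ R, ({i | r i ≠ 0} : Finset ι) = S) ∧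
      ∀ l : ι → F, ({i | l i ≠ 0} : Finset ι) = S →
        ∃ c : F, c ≠ 0 ∧ ∃ r ∈ R, l = c • r := by
  rcases S.eq_empty_or_nonempty with rfl | ⟨m, hm⟩
  · refine ⟨{0}, by simp, by simp, fun l hl =>
      ⟨1, one_ne_zero, 0, mem_singleton_self _, ?_⟩⟩
    ext i
    simpa using filter_eq_empty_iff.1 hl (mem_univ i)
  -- the representative of a line is the vector on it with `m`-th coordinate `1`
  refine ⟨Fintype.piFinset fun i => if i = m then {1} else if i ∈ S then {0}ᶜ else {0},
    ?_, fun r hr => ?_, fun l hl => ?_⟩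
  · rw [Fintype.card_piFinset, ← prod_erase_mul _ _ (mem_univ m), if_pos rfl, card_singleton,
      mul_one, ← card_erase_of_mem hm, ← prod_const,
      ← prod_subset (erase_subset_erase _ (subset_univ S))]
    · refine prod_congr rfl fun i hi => ?_
      rw [if_neg (ne_of_mem_erase hi), if_pos (mem_of_mem_erase hi), card_compl, card_singleton]
    · intro i hi his
      rw [if_neg (ne_of_mem_erase hi), if_neg (by simpa [ne_of_mem_erase hi] using his),
        card_singleton]
  · ext i
    have := Fintype.mem_piFinset.1 hr i
    split_ifs at this with him his <;> simp_all
  · have hmem (i : ι) : l i ≠ 0 ↔ i ∈ S := by simp [← hl]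
    have hlm : l m ≠ 0 := (hmem m).2 hm
    refine ⟨l m, hlm, (l m)⁻¹ • l, Fintype.mem_piFinset.2 fun i => ?_,
      by simp [smul_smul, hlm]⟩
    split_ifs with him his
    · simp [him, hlm]
    · simp [hlm, (hmem i).2 his]
    · simp [not_not.1 ((not_congr (hmem i)).2 his)]

theorem measure_pi_setOf_sum_smul_eq_zero_le {ι F V : Type*} [Fintype ι] [Field F] [DecidableEq F]
    [AddCommGroup V] [Module F V] [MeasurableSpace V]
    (μ : Measure V) [IsProbabilityMeasure μ] (hμ : ∀ c : F, c ≠ 0 → μ.map (c • ·) = μ)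
    (l : ι → F) :
    Measure.pi (fun _ : ι => μ) {f | ∑ i, l i • f i = 0}
      ≤ Measure.pi (fun _ : Fin #{i | l i ≠ 0} => μ) {g | ∑ j, g j = 0} := by
  set S : Finset ι := {i | l i ≠ 0}
  set e : Fin #S → ι := fun j => S.equivFin.symm j
  have he : Function.Injective e := Subtype.val_injective.comp S.equivFin.symm.injective
  have hsum (f : ι → V) : ∑ i, l i • f i = ∑ j, l (e j) • f (e j) := by
    rw [← sum_filter_of_ne fun i _ h => left_ne_zero_of_smul h, ← sum_coe_sort,
      ← S.equivFin.symm.sum_comp]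
  calc Measure.pi (fun _ : ι => μ) {f | ∑ i, l i • f i = 0}
      = Measure.pi (fun _ : ι => μ) ((fun f => f ∘ e) ⁻¹'
          ((fun g j => l (e j) • g j) ⁻¹' {g | ∑ j, g j = 0})) := by
        simp only [Set.preimage_ofPred_eq, Function.comp_apply, hsum]
    _ ≤ Measure.pi (fun _ : Fin #S => μ)
          ((fun g j => l (e j) • g j) ⁻¹' {g | ∑ j, g j = 0}) :=
        measure_preimage_le_of_map_eq (Measure.pi_map_comp_of_injective μ he) _
    _ ≤ Measure.pi (fun _ : Fin #S => μ) {g | ∑ j, g j = 0} :=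
        measure_preimage_le_of_map_eq
          (Measure.pi_map_pi_of_map_eq fun j => hμ _ (mem_filter.1 (S.equivFin.symm j).2).2) _

theorem setOf_exists_sum_smul_eq_zero_subset {ι F V : Type*} [Fintype ι] [Field F] [DecidableEq F]
    [AddCommGroup V] [Module F V] (R : Finset ι → Finset (ι → F))
    (hR : ∀ S (l : ι → F), ({i | l i ≠ 0} : Finset ι) = S →
      ∃ c : F, c ≠ 0 ∧ ∃ r ∈ R S, l = c • r) :
    {f : ι → V | ∃ l : ι → F, l ≠ 0 ∧ ∑ i, l i • f i = 0} ⊆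
      ⋃ w ∈ Icc 1 (Fintype.card ι), ⋃ S ∈ powersetCard w univ, ⋃ r ∈ R S,
        {f | ∑ i, r i • f i = 0} := by
  rintro f ⟨l, hl, hlf⟩
  obtain ⟨c, hc, r, hr, rfl⟩ := hR _ l rfl
  have hsupp : ({i | (c • r) i ≠ 0} : Finset ι).Nonempty := by
    simpa [filter_nonempty_iff, Function.ne_iff] using hl
  simp only [Set.mem_iUnion, mem_Icc, mem_powersetCard, exists_prop]
  refine ⟨_, ⟨hsupp.card_pos, card_le_univ _⟩, _, ⟨subset_univ _, rfl⟩, r, hr, ?_⟩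
  have : c • ∑ i, r i • f i = 0 := by simpa [smul_sum, smul_smul] using hlf
  exact (smul_eq_zero.1 this).resolve_left hc

/-- union bound over relations counted up to proportionality:
`P[u_1,...,u_n linearly dependent] ≤ Σ_{w≥1} C(n,w) (q-1)^{w-1} P[s_w = 0]`. -/
theorem stmt8 {F V : Type*} [Field F] [Fintype F]
    [AddCommGroup V] [Module F V] [MeasurableSpace V]
    (μ : Measure V) [IsProbabilityMeasure μ]
    (hμ : ∀ l : F, l ≠ 0 → μ.map (fun v => l • v) = μ) (n : ℕ) :
    Measure.pi (fun _ : Fin n => μ)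
      {f : Fin n → V | ∃ l : Fin n → F, l ≠ 0 ∧ ∑ i, l i • f i = 0}
    ≤ ∑ w ∈ Finset.Icc 1 n,
        (n.choose w : ENNReal) * ((Fintype.card F - 1 : ℕ) : ENNReal) ^ (w - 1) *
          Measure.pi (fun _ : Fin w => μ) {f : Fin w → V | ∑ i, f i = 0} := by
  classical
  choose R hRcard hRsupp hRcover using
    exists_finset_line_representatives_of_support (ι := Fin n) (F := F)
  have hcover := setOf_exists_sum_smul_eq_zero_subset (V := V) R hRcover
  rw [Fintype.card_fin] at hcover
  calc _ ≤ ∑ w ∈ Icc 1 n, ∑ S ∈ powersetCard w univ, ∑ r ∈ R S,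
        Measure.pi (fun _ : Fin n => μ) {f | ∑ i, r i • f i = 0} :=
        (measure_mono hcover).trans <| (measure_biUnion_finset_le _ _).trans <|
          sum_le_sum fun w _ => (measure_biUnion_finset_le _ _).trans <|
            sum_le_sum fun S _ => measure_biUnion_finset_le _ _
    _ ≤ ∑ w ∈ Icc 1 n, ∑ S ∈ powersetCard w univ, ∑ r ∈ R S,
        Measure.pi (fun _ : Fin w => μ) {f : Fin w → V | ∑ i, f i = 0} := by
        gcongr with w _ S hS r hr
        have := measure_pi_setOf_sum_smul_eq_zero_le μ hμ r
        rwa [hRsupp S r hr, (mem_powersetCard.1 hS).2] at this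
    _ = _ := by
        refine sum_congr rfl fun w _ => ?_
        rw [sum_congr rfl fun S hS => by rw [sum_const, hRcard, (mem_powersetCard.1 hS).2],
          sum_const, card_powersetCard, card_univ, Fintype.card_fin]
        simp [nsmul_eq_mul, mul_assoc]
end

section
/- Let u_1,...,u_w be i.i.d. random k×ℓ matrices over F_q, each of the form u_i = p_i q_iᵀ with p_i uniform on F_q^k and q_i uniform on F_q^ℓ, all independent. If w ≥ k+ℓ and k ≤ ℓ, then P[u_1 + ... + u_w = 0] ≤ C_q (1 - q^{-(w-ℓ)})^{-1} q^{-kℓ}, with C_q = Π_{j≥1}(1-q^{-j})^{-1}. -/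
/-- The constant `C_q = ∏_{j≥1} (1 - q^{-j})⁻¹`. -/
noncomputable def Cq (q : ℝ) : ℝ := ∏' j : ℕ, (1 - (q ^ (j + 1))⁻¹)⁻¹

/-!
Reading `∑ i, p_i q_iᵀ = 0` entrywise, a pair `(P, Y)` is a solution iff the `k` columns of `P`
are orthogonal to the `ℓ` columns `z_b ∈ F_q^w` of `Y`, so the number of solutions is
`∑_z q^{k (w - rank z)}`. With `c = q^{-k}`, appending a vector `v` to `z` raises the rank unless
`v` lies in the span of `z`, which happens for `q^{rank z}` of the `q^w` choices; hence the sum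
`∑_{z ∈ (F_q^w)^n} c^{rank z}` grows by a factor at most `q^n (1 - c) + q^w c` at each step.
That factor is at most `q^{w-k} (1 - q^{-(w-k-n)})⁻¹`, and these last factors multiply to at most
`C_q`.
-/

open Module Submodule Finset Matrix Filter

theorem Real.prod_le_tprod_of_one_le {ι : Type*} {f : ι → ℝ} (hf : Multipliable f)
    (h : ∀ i, 1 ≤ f i) (s : Finset ι) : ∏ i ∈ s, f i ≤ ∏' i, f i :=
  ge_of_tendsto hf.hasProd <| eventually_atTop.2 ⟨s, fun _ hst =>
    prod_le_prod_of_subset_of_one_le hst (fun i _ => zero_le_one.trans (h i)) fun i _ _ => h i⟩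

theorem one_add_le_inv_one_sub {t : ℝ} (ht : t < 1) : 1 + t ≤ (1 - t)⁻¹ := by
  rw [← one_div, le_div_iff₀ (by linarith)]
  nlinarith [sq_nonneg t]

section Cq

variable {Q : ℝ} (hQ : 1 < Q)
include hQ

theorem inv_pow_lt_one_of_one_lt {m : ℕ} (hm : m ≠ 0) : (Q ^ m)⁻¹ < 1 :=
  inv_lt_one_of_one_lt₀ (one_lt_pow₀ hQ hm)

theorem one_le_inv_one_sub_inv_pow_succ (m : ℕ) : 1 ≤ (1 - (Q ^ (m + 1))⁻¹)⁻¹ := by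
  have := inv_pow_lt_one_of_one_lt hQ m.add_one_ne_zero
  rw [one_le_inv₀ (by linarith)]
  linarith [inv_nonneg.2 (pow_nonneg (zero_lt_one.trans hQ).le (m + 1))]

theorem multipliable_Cq : Multipliable fun j : ℕ => (1 - (Q ^ (j + 1))⁻¹)⁻¹ := by
  have hQinv : Q⁻¹ < 1 := inv_lt_one_of_one_lt₀ hQ
  have hbound (j : ℕ) : (1 - (Q ^ (j + 1))⁻¹)⁻¹ - 1 ≤ (1 - Q⁻¹)⁻¹ * Q⁻¹ ^ j := by
    have hx : (Q ^ (j + 1))⁻¹ ≤ Q⁻¹ ^ j := by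
      rw [← inv_pow]
      exact pow_le_pow_of_le_one (by positivity) hQinv.le j.le_succ
    have hx1 : (Q ^ (j + 1))⁻¹ ≤ Q⁻¹ :=
      inv_anti₀ (by positivity) (le_self_pow₀ hQ.le j.add_one_ne_zero)
    generalize (Q ^ (j + 1))⁻¹ = x at hx hx1
    have h1 : 0 < 1 - x := by linarith
    calc (1 - x)⁻¹ - 1 = x * (1 - x)⁻¹ := by field_simp; ring
      _ ≤ Q⁻¹ ^ j * (1 - Q⁻¹)⁻¹ := by gcongr
      _ = _ := mul_comm _ _
  have hsummable : Summable fun j : ℕ => (1 - (Q ^ (j + 1))⁻¹)⁻¹ - 1 :=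
    .of_nonneg_of_le (fun j => sub_nonneg.2 (one_le_inv_one_sub_inv_pow_succ hQ j)) hbound
      ((summable_geometric_of_lt_one (by positivity) hQinv).mul_left _)
  simpa using Real.multipliable_one_add_of_summable hsummable

theorem prod_le_Cq (s : Finset ℕ) : ∏ j ∈ s, (1 - (Q ^ (j + 1))⁻¹)⁻¹ ≤ Cq Q :=
  Real.prod_le_tprod_of_one_le (multipliable_Cq hQ) (one_le_inv_one_sub_inv_pow_succ hQ) s

theorem one_le_Cq : 1 ≤ Cq Q := by
  simpa using prod_le_Cq hQ ∅

theorem prod_range_inv_one_sub_inv_pow_le_Cq {k l w : ℕ} (hw : k + l ≤ w) :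
    ∏ j ∈ range l, (1 - (Q ^ (w - k - j))⁻¹)⁻¹ ≤ Cq Q := by
  have hinj : Set.InjOn (fun j => w - k - j - 1) (range l) := by
    intro i hi j hj h
    simp only [coe_range, Set.mem_Iio] at hi hj h
    omega
  calc ∏ j ∈ range l, (1 - (Q ^ (w - k - j))⁻¹)⁻¹
      = ∏ m ∈ (range l).image (fun j => w - k - j - 1), (1 - (Q ^ (m + 1))⁻¹)⁻¹ := by
        rw [prod_image hinj]
        refine prod_congr rfl fun j hj => ?_
        rw [Nat.sub_add_cancel (by simp at hj; omega)]
    _ ≤ Cq Q := prod_le_Cq hQ _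

theorem pow_mul_one_sub_add_le {j k w : ℕ} (hjkw : j + k < w) :
    Q ^ j * (1 - (Q ^ k)⁻¹) + Q ^ w * (Q ^ k)⁻¹
      ≤ Q ^ w * (Q ^ k)⁻¹ * (1 - (Q ^ (w - k - j))⁻¹)⁻¹ := by
  have hQ0 : 0 < Q := zero_lt_one.trans hQ
  have hsplit : Q ^ j = Q ^ w * (Q ^ k)⁻¹ * (Q ^ (w - k - j))⁻¹ := by
    rw [← pow_sub₀ _ hQ0.ne' (by omega), ← pow_sub₀ _ hQ0.ne' (by omega)]
    congr 1
    omega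
  calc Q ^ j * (1 - (Q ^ k)⁻¹) + Q ^ w * (Q ^ k)⁻¹
      ≤ Q ^ w * (Q ^ k)⁻¹ * (1 + (Q ^ (w - k - j))⁻¹) := by
        rw [mul_one_add, ← hsplit, add_comm]
        gcongr
        exact mul_le_of_le_one_right (by positivity) (sub_le_self _ (by positivity))
    _ ≤ _ := by
        gcongr
        exact one_add_le_inv_one_sub (inv_pow_lt_one_of_one_lt hQ (by omega))

end Cq

section SpanRank

variable {F V : Type*} [Field F] [Fintype F] [AddCommGroup V] [Module F V] [Fintype V]

theorem sum_pow_finrank_sup_span_singleton (U : Submodule F V) (c : ℝ) :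
    ∑ v : V, c ^ finrank F (U ⊔ span F {v} : Submodule F V)
      = c ^ finrank F U * ((Fintype.card F : ℝ) ^ finrank F U * (1 - c)
          + (Fintype.card F : ℝ) ^ finrank F V * c) := by
  classical
  have hcard_mem : #(univ.filter (· ∈ U)) = Fintype.card F ^ finrank F U := by
    rw [← Fintype.card_subtype]
    exact card_eq_pow_finrank
  have hcard_not_mem : (#(univ.filter (· ∉ U)) : ℝ)
      = (Fintype.card F : ℝ) ^ finrank F V - (Fintype.card F : ℝ) ^ finrank F U := by
    have := card_filter_add_card_filter_not (s := (univ : Finset V)) (· ∈ U)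
    rw [card_univ, card_eq_pow_finrank (K := F), hcard_mem] at this
    rw [eq_sub_iff_add_eq, add_comm]
    exact_mod_cast this
  have hterm (v : V) : c ^ finrank F (U ⊔ span F {v} : Submodule F V)
      = if v ∈ U then c ^ finrank F U else c ^ (finrank F U + 1) := by
    split_ifs with hv
    · rw [sup_eq_left.mpr ((span_singleton_le_iff_mem v U).mpr hv)]
    · rw [finrank_sup_span_singleton hv]
  rw [Fintype.sum_congr _ _ hterm, sum_ite, sum_const, sum_const, nsmul_eq_mul, nsmul_eq_mul,
    hcard_not_mem, hcard_mem]
  push_cast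
  ring

theorem sum_pow_finrank_span_le_prod {c : ℝ} (hc0 : 0 ≤ c) (hc1 : c ≤ 1) (n : ℕ) :
    ∑ z : Fin n → V, c ^ finrank F (span F (Set.range z))
      ≤ ∏ j ∈ range n, ((Fintype.card F : ℝ) ^ j * (1 - c)
          + (Fintype.card F : ℝ) ^ finrank F V * c) := by
  set q : ℝ := (Fintype.card F : ℝ)
  have hq : 1 ≤ q := Nat.one_le_cast.mpr Fintype.card_pos
  induction n with
  | zero => simpa using pow_le_one₀ hc0 hc1
  | succ n ih =>
    have hstep (z : Fin n → V) :
        ∑ v : V, c ^ finrank F (span F (Set.range (Fin.cons v z : Fin (n + 1) → V)))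
          ≤ (q ^ n * (1 - c) + q ^ finrank F V * c) * c ^ finrank F (span F (Set.range z)) := by
      have hspan (v : V) : finrank F (span F (Set.range (Fin.cons v z : Fin (n + 1) → V)))
          = finrank F (span F (Set.range z) ⊔ span F {v} : Submodule F V) := by
        rw [Fin.range_cons, span_insert, sup_comm]
      simp only [hspan]
      rw [sum_pow_finrank_sup_span_singleton, mul_comm]
      gcongr
      exact (finrank_range_le_card (R := F) z).trans_eq (Fintype.card_fin n)
    calc ∑ z : Fin (n + 1) → V, c ^ finrank F (span F (Set.range z))
        = ∑ z : Fin n → V, ∑ v : V,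
            c ^ finrank F (span F (Set.range (Fin.cons v z : Fin (n + 1) → V))) := by
          rw [← (Fin.consEquiv fun _ => V).sum_comp, Fintype.sum_prod_type, sum_comm]
          rfl
      _ ≤ (q ^ n * (1 - c) + q ^ finrank F V * c)
            * ∑ z : Fin n → V, c ^ finrank F (span F (Set.range z)) := by
          rw [mul_sum]
          exact sum_le_sum fun z _ => hstep z
      _ ≤ _ := by
          rw [prod_range_succ, mul_comm _ (q ^ n * (1 - c) + _)]
          gcongr

end SpanRank

section Orthogonal

variable {F : Type*} [Field F] [Fintype F] {w : ℕ}

theorem card_orthogonal_range {n : ℕ} (z : Fin n → Fin w → F) :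
    Nat.card {x : Fin w → F // ∀ b, x ⬝ᵥ z b = 0}
      = Fintype.card F ^ (w - finrank F (span F (Set.range z))) := by
  have hker : {x : Fin w → F // ∀ b, x ⬝ᵥ z b = 0} ≃ LinearMap.ker (of z).mulVecLin :=
    Equiv.subtypeEquivRight fun x => by
      simp [funext_iff, mulVec, dotProduct_comm x]
  have hrank := LinearMap.finrank_range_add_finrank_ker (of z).mulVecLin
  rw [← rank, rank_eq_finrank_span_row, finrank_fin_fun] at hrank
  rw [Nat.card_congr hker, Module.natCard_eq_pow_finrank (K := F), Nat.card_eq_fintype_card]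
  congr 1
  exact (Nat.sub_eq_of_eq_add' hrank.symm).symm

theorem card_sum_vecMulVec_eq_zero (k l : ℕ) :
    Nat.card {x : (Fin w → Fin k → F) × (Fin w → Fin l → F) //
        ∑ i, vecMulVec (x.1 i) (x.2 i) = 0}
      = ∑ z : Fin l → Fin w → F,
          (Fintype.card F ^ (w - finrank F (span F (Set.range z)))) ^ k := by
  have hzero_iff (p : Fin w → Fin k → F) (y : Fin w → Fin l → F) :
      ∑ i, vecMulVec (p i) (y i) = 0 ↔
        ∀ a b, (fun i => p i a) ⬝ᵥ (fun i => y i b) = 0 := by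
    simp [← Matrix.ext_iff, Matrix.sum_apply, vecMulVec_apply, dotProduct]
  have hsplit : {x : (Fin w → Fin k → F) × (Fin w → Fin l → F) //
        ∑ i, vecMulVec (x.1 i) (x.2 i) = 0}
      ≃ Σ z : Fin l → Fin w → F, (Fin k → {x : Fin w → F // ∀ b, x ⬝ᵥ z b = 0}) :=
    ((Equiv.prodComm _ _).trans (Equiv.prodCongr (Equiv.piComm _) (Equiv.piComm _))).subtypeEquiv
      (fun x => hzero_iff x.1 x.2) |>.trans <|
    (Equiv.subtypeProdEquivSigmaSubtype fun z X => ∀ a b, X a ⬝ᵥ z b = 0).trans <|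
    Equiv.sigmaCongrRight fun z => Equiv.subtypePiEquivPi (p := fun _ x => ∀ b, x ⬝ᵥ z b = 0)
  rw [Nat.card_congr hsplit, Nat.card_sigma]
  simp only [Nat.card_fun, card_orthogonal_range, Nat.card_eq_fintype_card, Fintype.card_fin]

theorem cast_card_sum_vecMulVec_eq_zero (k l : ℕ) :
    (Nat.card {x : (Fin w → Fin k → F) × (Fin w → Fin l → F) //
        ∑ i, vecMulVec (x.1 i) (x.2 i) = 0} : ℝ)
      = (Fintype.card F : ℝ) ^ (w * k) * ∑ z : Fin l → Fin w → F,
          ((Fintype.card F : ℝ) ^ k)⁻¹ ^ finrank F (span F (Set.range z)) := by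
  have hq : (Fintype.card F : ℝ) ≠ 0 := by positivity
  rw [card_sum_vecMulVec_eq_zero, mul_sum]
  push_cast
  refine sum_congr rfl fun z _ => ?_
  have hrank : finrank F (span F (Set.range z)) ≤ w :=
    (Submodule.finrank_le _).trans_eq (finrank_fin_fun F)
  rw [pow_sub₀ _ hq hrank]
  ring

end Orthogonal

theorem card_sum_vecMulVec_eq_zero_le {F : Type*} [Field F] [Fintype F] {k l w : ℕ}
    (hw : k + l ≤ w) :
    (Nat.card {x : (Fin w → Fin k → F) × (Fin w → Fin l → F) //
        ∑ i, vecMulVec (x.1 i) (x.2 i) = 0} : ℝ)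
      ≤ (Fintype.card F : ℝ) ^ ((k + l) * w) * Cq (Fintype.card F)
          * ((Fintype.card F : ℝ) ^ (k * l))⁻¹ := by
  set Q : ℝ := (Fintype.card F : ℝ)
  set c : ℝ := (Q ^ k)⁻¹
  have hQ : 1 < Q := Nat.one_lt_cast.mpr Fintype.one_lt_card
  have hc0 : 0 ≤ c := by positivity
  have hc1 : c ≤ 1 := inv_le_one_of_one_le₀ (one_le_pow₀ hQ.le)
  have hsum := sum_pow_finrank_span_le_prod (F := F) (V := Fin w → F) hc0 hc1 l
  rw [finrank_fin_fun] at hsum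
  have hprod : ∏ j ∈ range l, (Q ^ j * (1 - c) + Q ^ w * c) ≤ (Q ^ w * c) ^ l * Cq Q :=
    calc ∏ j ∈ range l, (Q ^ j * (1 - c) + Q ^ w * c)
        ≤ ∏ j ∈ range l, (Q ^ w * c * (1 - (Q ^ (w - k - j))⁻¹)⁻¹) := by
          refine prod_le_prod (fun j _ => by have := sub_nonneg.2 hc1; positivity) fun j hj => ?_
          exact pow_mul_one_sub_add_le hQ (by simp at hj; omega)
      _ = (Q ^ w * c) ^ l * ∏ j ∈ range l, (1 - (Q ^ (w - k - j))⁻¹)⁻¹ := by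
          rw [prod_mul_distrib, prod_const, card_range]
      _ ≤ (Q ^ w * c) ^ l * Cq Q := by
          gcongr
          exact prod_range_inv_one_sub_inv_pow_le_Cq hQ hw
  rw [cast_card_sum_vecMulVec_eq_zero]
  calc Q ^ (w * k) * ∑ z : Fin l → Fin w → F, c ^ finrank F (span F (Set.range z))
      ≤ Q ^ (w * k) * ((Q ^ w * c) ^ l * Cq Q) := by gcongr; exact hsum.trans hprod
    _ = Q ^ ((k + l) * w) * Cq Q * (Q ^ (k * l))⁻¹ := by ring

theorem stmt13_general {F : Type*} [Field F] [Fintype F] {k l w : ℕ}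
    (hk : 1 ≤ k) (hw : k + l ≤ w) :
    (Nat.card {x : (Fin w → Fin k → F) × (Fin w → Fin l → F) //
        ∑ i, Matrix.vecMulVec (x.1 i) (x.2 i) = 0} : ℝ)
      / (Fintype.card F : ℝ) ^ ((k + l) * w)
    ≤ Cq (Fintype.card F) * (1 - ((Fintype.card F : ℝ) ^ (w - l))⁻¹)⁻¹
        * ((Fintype.card F : ℝ) ^ (k * l))⁻¹ := by
  set Q : ℝ := (Fintype.card F : ℝ)
  have hQ : 1 < Q := Nat.one_lt_cast.mpr Fintype.one_lt_card
  have hfactor : 1 ≤ (1 - (Q ^ (w - l))⁻¹)⁻¹ := by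
    obtain ⟨m, hm⟩ : ∃ m, w - l = m + 1 := ⟨w - l - 1, by omega⟩
    rw [hm]
    exact one_le_inv_one_sub_inv_pow_succ hQ m
  rw [div_le_iff₀ (by positivity)]
  calc _ ≤ Q ^ ((k + l) * w) * Cq Q * (Q ^ (k * l))⁻¹ := card_sum_vecMulVec_eq_zero_le hw
    _ ≤ Q ^ ((k + l) * w) * (Cq Q * (1 - (Q ^ (w - l))⁻¹)⁻¹) * (Q ^ (k * l))⁻¹ := by
        gcongr
        exact le_mul_of_one_le_right (zero_le_one.trans (one_le_Cq hQ)) hfactor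
    _ = _ := by ring

/-- for `w ≥ k+ℓ`, the probability that `w` i.i.d. random rank-≤1 matrices
`u_i = p_i q_iᵀ` (with `p_i, q_i` uniform) sum to zero is at most
`C_q (1 - q^{-(w-ℓ)})⁻¹ q^{-kℓ}`. -/
theorem stmt13 {F : Type*} [Field F] [Fintype F] {k l w : ℕ}
    (hk : 1 ≤ k) (hkl : k ≤ l) (hw : k + l ≤ w) :
    (Nat.card {x : (Fin w → Fin k → F) × (Fin w → Fin l → F) //
        ∑ i, Matrix.vecMulVec (x.1 i) (x.2 i) = 0} : ℝ)
      / (Fintype.card F : ℝ) ^ ((k + l) * w)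
    ≤ Cq (Fintype.card F) * (1 - ((Fintype.card F : ℝ) ^ (w - l))⁻¹)⁻¹
        * ((Fintype.card F : ℝ) ^ (k * l))⁻¹ :=
  stmt13_general hk hw
end
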